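/- Let α ∈ (0,1), let r ≥ 2 be an integer, and let M be an n×n real matrix such that for every integer k ≥ 1−r the series E(k) := Σ_{i=0}^{∞} M^{i}·H_{iα+α−1}(k, −r) converges absolutely. Then the nabla Mittag-Leffler matrix function E solves the undelayed linear Riemann–Liouville fractional difference system: for every integer k ≥ 1, ∇_{−r}^{α} E(k) = M·E(k), i.e., Σ_{s=1−r}^{k} H_{−α−1}(k, s−1)·E(s) = M·E(k). -/

import Mathlib

/-- Nabla fractional Taylor monomial `H_γ(k,a)`. -/
noncomputable def H (γ : ℝ) (k a : ℤ) : ℝ :=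
  if 1 ≤ k - a then
    Real.Gamma ((k : ℝ) - (a : ℝ) + γ) / (Real.Gamma ((k : ℝ) - (a : ℝ)) * Real.Gamma (γ + 1))
  else 0

/-- The nabla Mittag-Leffler matrix function `E_{M,α,α-1}(k,-r) = Σ_{i=0}^{∞} M^i·H_{iα+α-1}(k,-r)`. -/
noncomputable def ML {n : ℕ} (α : ℝ) (r : ℤ) (M : Matrix (Fin n) (Fin n) ℝ) (k : ℤ) :
    Matrix (Fin n) (Fin n) ℝ :=
  ∑' i : ℕ, H ((i : ℝ) * α + α - 1) k (-r) • M ^ i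

open Finset

/- descPochhammer as a product -/
lemma descPochhammer_smeval_real (x : ℝ) : ∀ m : ℕ,
    (descPochhammer ℤ m).smeval x = ∏ j ∈ range m, (x - j)
  | 0 => by simp [descPochhammer_zero]
  | m + 1 => by
    rw [descPochhammer_succ_right, Polynomial.smeval_mul, descPochhammer_smeval_real x m,
      prod_range_succ, Polynomial.smeval_sub, Polynomial.smeval_X, Polynomial.smeval_natCast]
    ring

lemma ring_choose_real (x : ℝ) (p : ℕ) :
    Ring.choose x p = (∏ j ∈ range p, (x - j)) / (Nat.factorial p) := by
  have h := Ring.descPochhammer_eq_factorial_smul_choose x p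
  rw [descPochhammer_smeval_real] at h
  have hp : ((Nat.factorial p : ℕ) : ℝ) ≠ 0 := Nat.cast_ne_zero.2 p.factorial_ne_zero
  rw [h, nsmul_eq_mul, mul_div_cancel_left₀ _ hp]

lemma prod_neg_eq (f : ℕ → ℝ) (s : Finset ℕ) :
    ∏ j ∈ s, (-(f j)) = (-1) ^ s.card * ∏ j ∈ s, f j := by
  calc ∏ j ∈ s, (-(f j)) = ∏ j ∈ s, ((-1 : ℝ) * f j) := prod_congr rfl fun j _ => by ring
    _ = (∏ _j ∈ s, (-1 : ℝ)) * ∏ j ∈ s, f j := prod_mul_distrib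
    _ = (-1) ^ s.card * ∏ j ∈ s, f j := by rw [prod_const]

/-- Real Chu–Vandermonde identity in falling-factorial form. -/
lemma vdm (x y : ℝ) (t : ℕ) :
    ∑ p ∈ range (t + 1), ((∏ j ∈ range p, (x - j)) / (Nat.factorial p)) *
      ((∏ j ∈ range (t - p), (y - j)) / (Nat.factorial (t - p)))
      = (∏ j ∈ range t, (x + y - j)) / (Nat.factorial t) := by
  have h := Ring.add_choose_eq (r := x) (s := y) t (Commute.all x y)
  rw [Finset.Nat.sum_antidiagonal_eq_sum_range_succ_mk] at h
  simp only [ring_choose_real] at h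
  exact h.symm

/-- Signed version matching nabla monomials. -/
lemma vdm' (α μ : ℝ) (t : ℕ) :
    ∑ p ∈ range (t + 1), ((∏ j ∈ range (t - p), ((j : ℝ) - α)) / (Nat.factorial (t - p))) *
      ((∏ j ∈ range p, (μ + 1 + (j : ℝ))) / (Nat.factorial p))
      = (∏ j ∈ range t, (μ + 1 - α + (j : ℝ))) / (Nat.factorial t) := by
  have h := vdm (-μ - 1) α t
  have e1 : ∀ p : ℕ, ∏ j ∈ range p, (μ + 1 + (j : ℝ)) = (-1) ^ p * ∏ j ∈ range p, (-μ - 1 - j) := by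
    intro p
    have h' := prod_neg_eq (fun j => -μ - 1 - (j : ℝ)) (range p)
    rw [card_range] at h'
    rw [← h']
    exact prod_congr rfl fun j _ => by ring
  have e2 : ∀ p : ℕ, ∏ j ∈ range p, ((j : ℝ) - α) = (-1) ^ p * ∏ j ∈ range p, (α - j) := by
    intro p
    have h' := prod_neg_eq (fun j => α - (j : ℝ)) (range p)
    rw [card_range] at h'
    rw [← h']
    exact prod_congr rfl fun j _ => by ring
  have e3 : ∏ j ∈ range t, (μ + 1 - α + (j : ℝ))
      = (-1) ^ t * ∏ j ∈ range t, (-μ - 1 + α - j) := by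
    have h' := prod_neg_eq (fun j => -μ - 1 + α - (j : ℝ)) (range t)
    rw [card_range] at h'
    rw [← h']
    exact prod_congr rfl fun j _ => by ring
  calc ∑ p ∈ range (t + 1), ((∏ j ∈ range (t - p), ((j : ℝ) - α)) / (Nat.factorial (t - p))) *
        ((∏ j ∈ range p, (μ + 1 + (j : ℝ))) / (Nat.factorial p))
      = ∑ p ∈ range (t + 1), (-1) ^ t * (((∏ j ∈ range p, (-μ - 1 - j)) / (Nat.factorial p)) *
        ((∏ j ∈ range (t - p), (α - j)) / (Nat.factorial (t - p)))) := by
        refine sum_congr rfl fun p hp => ?_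
        rw [e1, e2]
        have hpt : p ≤ t := by
          have := mem_range.1 hp; omega
        have : ((-1 : ℝ)) ^ (t - p) * (-1) ^ p = (-1) ^ t := by
          rw [← pow_add, Nat.sub_add_cancel hpt]
        field_simp
        rw [← this]
        ring
    _ = (-1) ^ t * ((∏ j ∈ range t, (-μ - 1 + α - j)) / (Nat.factorial t)) := by rw [← mul_sum, h]
    _ = (∏ j ∈ range t, (μ + 1 - α + (j : ℝ))) / (Nat.factorial t) := by rw [e3]; ring

lemma Gamma_add_nat (x : ℝ) : ∀ (m : ℕ), (∀ j < m, x + (j : ℝ) ≠ 0) →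
    Real.Gamma (x + m) = (∏ j ∈ range m, (x + j)) * Real.Gamma x
  | 0, _ => by simp
  | m + 1, h => by
    have hx : x + (m : ℝ) ≠ 0 := h m (Nat.lt_succ_self m)
    have e : x + ((m + 1 : ℕ) : ℝ) = (x + m) + 1 := by push_cast; ring
    rw [e, Real.Gamma_add_one hx, Gamma_add_nat x m (fun j hj => h j (hj.trans (Nat.lt_succ_self m))),
      prod_range_succ]
    ring

lemma H_eq_prod (γ : ℝ) (k a : ℤ) (m : ℕ) (hm : k - a = (m : ℤ) + 1)
    (hγ1 : Real.Gamma (γ + 1) ≠ 0) (hγ : ∀ j < m, γ + 1 + (j : ℝ) ≠ 0) :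
    H γ k a = (∏ j ∈ range m, (γ + 1 + j)) / (Nat.factorial m) := by
  have hka : (k : ℝ) - a = (m : ℝ) + 1 := by exact_mod_cast congrArg (fun z : ℤ => (z : ℝ)) hm
  rw [H, if_pos (by omega : (1 : ℤ) ≤ k - a), hka]
  have h1 : (m : ℝ) + 1 + γ = (γ + 1) + m := by ring
  rw [h1, Gamma_add_nat (γ + 1) m hγ, Real.Gamma_nat_eq_factorial]
  rw [mul_comm ((Nat.factorial m : ℕ) : ℝ) (Real.Gamma (γ + 1)), mul_comm (∏ j ∈ range m, (γ + 1 + j)) _,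
    mul_div_mul_left _ _ hγ1]

lemma H_neg_one (k a : ℤ) : H (-1) k a = 0 := by
  rw [H]
  split
  · norm_num [Real.Gamma_zero]
  · rfl

lemma alpha_ne (α : ℝ) (hα0 : 0 < α) (hα1 : α < 1) (j : ℕ) : (j : ℝ) - α ≠ 0 := by
  intro h
  have : α = (j : ℝ) := by linarith
  rcases Nat.eq_zero_or_pos j with h0 | h1
  · rw [h0] at this; simp at this; linarith
  · have : (1 : ℝ) ≤ (j : ℝ) := by exact_mod_cast h1
    linarith

/-- The key convolution identity: `∇ᵃ H_μ = H_{μ-α}`. -/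
lemma conv (α μ : ℝ) (hα0 : 0 < α) (hα1 : α < 1) (hμ : -1 < μ) (a k : ℤ) (hk : 2 ≤ k - a) :
    ∑ s ∈ Finset.Icc (a + 1) k, H (-α - 1) k (s - 1) * H μ s a = H (μ - α) k a := by
  obtain ⟨T, hT⟩ : ∃ T : ℕ, k - a = (T : ℤ) + 1 := ⟨(k - a - 1).toNat, by omega⟩
  have hT1 : 1 ≤ T := by omega
  have hGneg : Real.Gamma (-α - 1 + 1) ≠ 0 := by
    have e : -α - 1 + 1 = -α := by ring
    rw [e]
    refine Real.Gamma_ne_zero fun m => ?_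
    intro h
    exact alpha_ne α hα0 hα1 m (by linarith)
  -- reindex the sum
  have hinj : Function.Injective (fun p : ℕ => a + 1 + (p : ℤ)) := fun p q h => by simp only [add_right_inj] at h; exact_mod_cast h
  have hmap : Finset.Icc (a + 1) k =
      (range (T + 1)).map ⟨fun p : ℕ => a + 1 + (p : ℤ), hinj⟩ := by
    ext s
    simp only [Finset.mem_Icc, Finset.mem_map, Finset.mem_range, Function.Embedding.coeFn_mk]
    constructor
    · intro hs
      exact ⟨(s - (a + 1)).toNat, by omega, by omega⟩
    · rintro ⟨p, hp, rfl⟩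
      omega
  rw [hmap, Finset.sum_map]
  simp only [Function.Embedding.coeFn_mk]
  have hstep : ∀ p ∈ range (T + 1),
      H (-α - 1) k (a + 1 + (p : ℤ) - 1) * H μ (a + 1 + (p : ℤ)) a
        = ((∏ j ∈ range (T - p), ((j : ℝ) - α)) / (Nat.factorial (T - p))) *
          ((∏ j ∈ range p, (μ + 1 + (j : ℝ))) / (Nat.factorial p)) := by
    intro p hp
    have hpT : p ≤ T := by have := mem_range.1 hp; omega
    have h1 : H (-α - 1) k (a + 1 + (p : ℤ) - 1)
        = (∏ j ∈ range (T - p), (-α - 1 + 1 + (j : ℝ))) / (Nat.factorial (T - p)) := by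
      refine H_eq_prod _ _ _ (T - p) (by omega) hGneg fun j _ => ?_
      have e : -α - 1 + 1 + (j : ℝ) = (j : ℝ) - α := by ring
      rw [e]; exact alpha_ne α hα0 hα1 j
    have h2 : H μ (a + 1 + (p : ℤ)) a = (∏ j ∈ range p, (μ + 1 + (j : ℝ))) / (Nat.factorial p) := by
      refine H_eq_prod _ _ _ p (by omega) (Real.Gamma_pos_of_pos (by linarith)).ne' fun j _ => ?_
      have hj0 : (0 : ℝ) ≤ (j : ℝ) := Nat.cast_nonneg j
      intro hcon; linarith
    rw [h1, h2]
    congr 1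
    congr 1
    exact prod_congr rfl fun j _ => by ring
  rw [Finset.sum_congr rfl hstep, vdm']
  by_cases h0 : μ + 1 - α = 0
  · have e : μ - α = -1 := by linarith
    rw [e, H_neg_one]
    rw [Finset.prod_eq_zero (mem_range.2 (by omega : 0 < T))]
    · simp
    · simpa using h0
  · rw [H_eq_prod (μ - α) k a T hT]
    · exact congrArg (· / ((Nat.factorial T) : ℝ)) (prod_congr rfl fun j _ => by ring)
    · refine Real.Gamma_ne_zero fun m => ?_
      rcases Nat.eq_zero_or_pos m with hm | hm
      · rw [hm]; push_cast; intro h; apply h0; linarith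
      · have : (1 : ℝ) ≤ (m : ℝ) := by exact_mod_cast hm
        intro h; linarith
    · intro j hj
      rcases Nat.eq_zero_or_pos j with hj0 | hj1
      · rw [hj0]; push_cast; intro h; apply h0; linarith
      · have : (1 : ℝ) ≤ (j : ℝ) := by exact_mod_cast hj1
        intro h; linarith

/-- The nabla Mittag-Leffler matrix function solves the undelayed linear
Riemann–Liouville fractional difference system: `∇_{-r}^{α} E(k) = M·E(k)` for `k ≥ 1`. -/
theorem ML_solves_linear_system {n : ℕ} (α : ℝ) (hα0 : 0 < α) (hα1 : α < 1)
    (r : ℤ) (hr : 2 ≤ r) (M : Matrix (Fin n) (Fin n) ℝ)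
    (hconv : ∀ k : ℤ, 1 - r ≤ k → ∀ x y : Fin n,
      Summable fun i : ℕ => |(H ((i : ℝ) * α + α - 1) k (-r) • M ^ i) x y|) :
    ∀ k : ℤ, 1 ≤ k →
      ∑ s ∈ Finset.Icc (1 - r) k, H (-α - 1) k (s - 1) • ML α r M s = M * ML α r M k := by
  have hsum : ∀ k : ℤ, 1 - r ≤ k → ∀ x y : Fin n,
      Summable fun i : ℕ => H ((i : ℝ) * α + α - 1) k (-r) * (M ^ i) x y := by
    intro k hk x y
    have h := (hconv k hk x y).of_abs
    simpa [Matrix.smul_apply, smul_eq_mul] using h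
  have hMsum : ∀ k : ℤ, 1 - r ≤ k →
      Summable fun i : ℕ => H ((i : ℝ) * α + α - 1) k (-r) • M ^ i := by
    intro k hk
    refine Pi.summable.2 fun x => Pi.summable.2 fun y => ?_
    simpa [Matrix.smul_apply, smul_eq_mul] using hsum k hk x y
  have hML : ∀ k : ℤ, 1 - r ≤ k → ∀ x y : Fin n,
      ML α r M k x y = ∑' i : ℕ, H ((i : ℝ) * α + α - 1) k (-r) * (M ^ i) x y := by
    intro k hk x y
    rw [ML]
    erw [tsum_apply (hMsum k hk), tsum_apply (Pi.summable.1 (hMsum k hk) x)]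
    simp [Matrix.smul_apply, smul_eq_mul]
  intro k hk
  have hkr : 1 - r ≤ k := by omega
  ext x y
  rw [Matrix.sum_apply, Matrix.mul_apply]
  -- LHS
  have lhs_eq : ∑ s ∈ Finset.Icc (1 - r) k, (H (-α - 1) k (s - 1) • ML α r M s) x y
      = ∑' i : ℕ, H ((i : ℝ) * α - 1) k (-r) * (M ^ i) x y := by
    have step1 : ∀ s ∈ Finset.Icc (1 - r) k,
        (H (-α - 1) k (s - 1) • ML α r M s) x y
          = ∑' i : ℕ, H (-α - 1) k (s - 1) *
              (H ((i : ℝ) * α + α - 1) s (-r) * (M ^ i) x y) := by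
      intro s hs
      have hs' : 1 - r ≤ s := (Finset.mem_Icc.1 hs).1
      rw [Matrix.smul_apply, smul_eq_mul, hML s hs' x y, tsum_mul_left]
    rw [Finset.sum_congr rfl step1]
    rw [← Summable.tsum_finsetSum (fun s hs => ((hsum s (Finset.mem_Icc.1 hs).1 x y).mul_left _))]
    refine tsum_congr fun i => ?_
    have : ∑ s ∈ Finset.Icc (1 - r) k,
        H (-α - 1) k (s - 1) * (H ((i : ℝ) * α + α - 1) s (-r) * (M ^ i) x y)
        = (∑ s ∈ Finset.Icc (1 - r) k,
            H (-α - 1) k (s - 1) * H ((i : ℝ) * α + α - 1) s (-r)) * (M ^ i) x y := by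
      rw [Finset.sum_mul]
      exact Finset.sum_congr rfl fun s _ => by ring
    rw [this]
    have hicc : Finset.Icc (1 - r) k = Finset.Icc (-r + 1) k := by
      congr 1; ring
    rw [hicc, conv α ((i : ℝ) * α + α - 1) hα0 hα1
      (by have : (0 : ℝ) ≤ (i : ℝ) * α := by positivity
          linarith) (-r) k (by omega)]
    congr 2
    ring
  rw [lhs_eq]
  -- RHS
  have rhs_eq : ∑ z, M x z * ML α r M k z y
      = ∑' i : ℕ, ∑ z, M x z * (H ((i : ℝ) * α + α - 1) k (-r) * (M ^ i) z y) := by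
    have : ∀ z, M x z * ML α r M k z y
        = ∑' i : ℕ, M x z * (H ((i : ℝ) * α + α - 1) k (-r) * (M ^ i) z y) := by
      intro z
      rw [hML k hkr z y, tsum_mul_left]
    rw [Finset.sum_congr rfl fun z _ => this z]
    rw [← Summable.tsum_finsetSum (fun z _ => (hsum k hkr z y).mul_left _)]
  rw [rhs_eq]
  -- now compare both tsums
  set f : ℕ → ℝ := fun i => H ((i : ℝ) * α - 1) k (-r) * (M ^ i) x y with hf
  have hf0 : f 0 = 0 := by
    simp only [hf, Nat.cast_zero, zero_mul, zero_sub]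
    rw [H_neg_one, zero_mul]
  have hfsucc : ∀ i : ℕ, f (i + 1)
      = ∑ z, M x z * (H ((i : ℝ) * α + α - 1) k (-r) * (M ^ i) z y) := by
    intro i
    have e1 : ((i + 1 : ℕ) : ℝ) * α - 1 = (i : ℝ) * α + α - 1 := by push_cast; ring
    have e2 : (M ^ (i + 1)) x y = ∑ z, M x z * (M ^ i) z y := by
      rw [pow_succ', Matrix.mul_apply]
    simp only [hf, e1, e2, Finset.mul_sum]
    exact Finset.sum_congr rfl fun z _ => by ring
  have hfsuccsum : Summable fun i : ℕ => f (i + 1) := by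
    have : Summable fun i : ℕ =>
        ∑ z, M x z * (H ((i : ℝ) * α + α - 1) k (-r) * (M ^ i) z y) :=
      summable_sum fun z _ => (hsum k hkr z y).mul_left _
    exact this.congr fun i => (hfsucc i).symm
  have hfsum : Summable f := (summable_nat_add_iff 1).1 hfsuccsum
  rw [Summable.tsum_eq_zero_add hfsum, hf0, zero_add]
  exact tsum_congr fun i => hfsucc i
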